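/- arXiv:1504.05797 — 6 statements merged into one kernel-verified Lean document; each statement's English description precedes it below -/
import Mathlib

section
/- Let h : Λ₁ → Λ₂ be a homomorphism of Muller automata over the same alphabet P(A). Then every LTL sentence over A satisfied by Λ₂ is also satisfied by Λ₁. -/
structure Muller (A : Type) where
  Q : Type
  fin : Finite Q
  trans : Q → Set A → Q → Prop
  init : Set Q
  final : Set (Set Q)

namespace Muller

variable {A : Type}

def IsRun (M : Muller A) (lam : ℕ → Set A) (rho : ℕ → M.Q) : Prop :=
  rho 0 ∈ M.init ∧ ∀ i, M.trans (rho i) (lam i) (rho (i + 1))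

def infSet {Q : Type} (rho : ℕ → Q) : Set Q :=
  {q | ∀ n, ∃ m, n ≤ m ∧ rho m = q}

def Accepts (M : Muller A) (lam : ℕ → Set A) : Prop :=
  ∃ rho, M.IsRun lam rho ∧ infSet rho ∈ M.final

def IsHom (M₁ M₂ : Muller A) (h : M₁.Q → M₂.Q) : Prop :=
  (∀ p a q, M₁.trans p a q → M₂.trans (h p) a (h q)) ∧
  (h '' M₁.init ⊆ M₂.init) ∧
  (∀ S ∈ M₁.final, h '' S ∈ M₂.final)

end Muller

/-- LTL sentences over a set of actions `A`: atoms, negation, finite disjunction,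
next, until. -/
inductive LTL (A : Type) where
  | atom : A → LTL A
  | not : LTL A → LTL A
  | disj : List (LTL A) → LTL A
  | next : LTL A → LTL A
  | until_ : LTL A → LTL A → LTL A

/-- The suffix of a trace starting at position `i`. -/
def Trace.suffix {A : Type} (lam : ℕ → Set A) (i : ℕ) : ℕ → Set A :=
  fun j => lam (i + j)

/-- Satisfaction of LTL sentences by traces. -/
def LTL.Sat {A : Type} : LTL A → (ℕ → Set A) → Prop
  | .atom a, lam => a ∈ lam 0
  | .not r, lam => ¬ LTL.Sat r lam
  | .disj E, lam => ∃ r ∈ E.attach, LTL.Sat r.1 lam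
  | .next r, lam => LTL.Sat r (Trace.suffix lam 1)
  | .until_ r₁ r₂, lam =>
      ∃ i, LTL.Sat r₂ (Trace.suffix lam i) ∧ ∀ j < i, LTL.Sat r₁ (Trace.suffix lam j)
decreasing_by
  all_goals simp_wf
  · have := List.sizeOf_lt_of_mem r.2
    omega
  all_goals omega

/-- An automaton satisfies a sentence iff every accepted trace satisfies it. -/
def Muller.SatLTL {A : Type} (M : Muller A) (r : LTL A) : Prop :=
  ∀ lam, M.Accepts lam → r.Sat lam

open Filter in
lemma infSet_mem_iff {Q : Type} (rho : ℕ → Q) (q : Q) :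
    q ∈ Muller.infSet rho ↔ {m | rho m = q}.Infinite := by
  rw [← Nat.frequently_atTop_iff_infinite, Filter.frequently_atTop]
  simp [Muller.infSet]

lemma infSet_comp {Q₁ Q₂ : Type} [Finite Q₁] (h : Q₁ → Q₂) (rho : ℕ → Q₁) :
    Muller.infSet (h ∘ rho) = h '' Muller.infSet rho := by
  ext q₂
  constructor
  · intro hq
    rw [infSet_mem_iff] at hq
    by_contra hc
    apply hq
    have : {m | (h ∘ rho) m = q₂} ⊆ ⋃ q : Q₁, {m | rho m = q ∧ h q = q₂} := by
      intro m hm; exact Set.mem_iUnion.2 ⟨rho m, rfl, hm⟩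
    refine Set.Finite.subset (Set.finite_iUnion fun q => ?_) this
    by_contra hinf
    have hinf : Set.Infinite {m | rho m = q ∧ h q = q₂} := hinf
    have hq2 : h q = q₂ := by
      obtain ⟨m, _, hm⟩ := hinf.nonempty
      exact hm
    refine hc ⟨q, ?_, hq2⟩
    rw [infSet_mem_iff]
    exact hinf.mono fun m hm => hm.1
  · rintro ⟨q, hq, rfl⟩
    rw [infSet_mem_iff] at hq ⊢
    exact hq.mono fun m hm => congrArg h hm

/-- along a homomorphism `h : Λ₁ → Λ₂`, every LTL sentence satisfied
by `Λ₂` is satisfied by `Λ₁`. -/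
theorem hom_reflects_satisfaction {A : Type} (M₁ M₂ : Muller A) (h : M₁.Q → M₂.Q)
    (hh : Muller.IsHom M₁ M₂ h) (r : LTL A) :
    M₂.SatLTL r → M₁.SatLTL r := by
  intro hs lam ⟨rho, ⟨hinit, htrans⟩, hfin⟩
  have := M₁.fin
  refine hs lam ⟨h ∘ rho, ⟨hh.2.1 ⟨rho 0, hinit, rfl⟩, fun i => hh.1 _ _ _ (htrans i)⟩, ?_⟩
  rw [infSet_comp]
  exact hh.2.2 _ hfin
end

section
/- For every function σ : A → A' between sets of actions and every Muller automaton Λ over P(A), the automaton Λ^σ over P(A') defined by keeping the same states, initial states, and final-state sets, and with transitions Δ^σ = {(p, α', q) | (p, σ⁻¹(α'), q) ∈ Δ}, together with the identity map as a homomorphism Λ^σ|_σ → Λ, is a universal arrow from the reduct functor _|_σ to Λ. That is, for every Muller automaton Λ' over P(A') and every homomorphism h : Λ'|_σ → Λ there exists a unique homomorphism g : Λ' → Λ^σ with g|_σ composed with the identity equal to h (i.e. g = h as a function and g is a homomorphism Λ' → Λ^σ). -/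
namespace Muller

variable {A A' : Type}

/-- The reduct `Λ'|_σ` of an automaton over `𝒫(A')` along `σ : A → A'`:
same states, initial states and final-state sets, transitions
`Δ'|_σ = {(p, σ⁻¹(α'), q) | (p, α', q) ∈ Δ'}`. -/
def reduct (σ : A → A') (M : Muller A') : Muller A where
  Q := M.Q
  fin := M.fin
  trans p α q := ∃ α', α = σ ⁻¹' α' ∧ M.trans p α' q
  init := M.init
  final := M.final

/-- The automaton `Λ^σ` over `𝒫(A')`: same states, initial states and final-state
sets, transitions `Δ^σ = {(p, α', q) | (p, σ⁻¹(α'), q) ∈ Δ}`. -/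
def lift (σ : A → A') (M : Muller A) : Muller A' where
  Q := M.Q
  fin := M.fin
  trans p α' q := M.trans p (σ ⁻¹' α') q
  init := M.init
  final := M.final

end Muller

namespace Muller

variable {A A' : Type} (σ : A → A') (M : Muller A)

theorem isHom_id_reduct_lift : IsHom (reduct σ (lift σ M)) M id := by
  refine ⟨?_, ?_, ?_⟩
  · rintro p _ q ⟨α', rfl, ht⟩
    exact ht
  · rintro _ ⟨p, hp, rfl⟩
    exact hp
  · intro S hS
    exact (Set.image_id S).symm ▸ hS

/-- Since reduct and lift keep the states, the hom-set bijection of `_|_σ ⊣ _^σ` is the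
identity on functions. -/
theorem isHom_lift_iff (M' : Muller A') (g : M'.Q → M.Q) :
    IsHom M' (lift σ M) g ↔ IsHom (reduct σ M') M g := by
  refine ⟨fun ⟨htrans, hinit, hfinal⟩ => ⟨?_, hinit, hfinal⟩,
    fun ⟨htrans, hinit, hfinal⟩ => ⟨?_, hinit, hfinal⟩⟩
  · rintro p _ q ⟨α', rfl, ht⟩
    exact htrans p α' q ht
  · intro p α' q ht
    exact htrans p (σ ⁻¹' α') q ⟨α', rfl, ht⟩

end Muller

/-- `(Λ^σ, id)` is a universal arrow from the reduct functor `_|_σ` to `Λ`: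
the identity is a homomorphism `Λ^σ|_σ → Λ`, and every homomorphism `h : Λ'|_σ → Λ`
equals (as a function, after composing with the identity) a unique homomorphism
`g : Λ' → Λ^σ`. -/
theorem lift_is_universal {A A' : Type} (σ : A → A') (M : Muller A) :
    Muller.IsHom (Muller.reduct σ (Muller.lift σ M)) M id ∧
    ∀ (M' : Muller A') (h : (Muller.reduct σ M').Q → M.Q),
      Muller.IsHom (Muller.reduct σ M') M h →
      ∃! g : M'.Q → (Muller.lift σ M).Q,
        Muller.IsHom M' (Muller.lift σ M) g ∧ g = h :=
  ⟨Muller.isHom_id_reduct_lift σ M, fun M' h hh =>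
    ⟨h, ⟨(Muller.isHom_lift_iff σ M M' h).2 hh, rfl⟩, fun _ hg => hg.2⟩⟩
end

section
/- For every morphism of orchestration schemes ⟨F, U, η, σ⟩ : O → O', the pair consisting of the sentence translations α_o = Spec(η_o) ; σ_{F(o)} and the model reductions β_o mapping (δ' : F(o) → g') to η_o ; U(δ') constitutes a comorphism of institutions Ins(O) → Ins(O'): for every orchestration o of O, every model δ' : F(o) → g' of F(o) in O', and every specification s over o, δ' ⊨'_{F(o)} α_o(s) if and only if β_o(δ') ⊨_o s. -/
open CategoryTheory

/-
STATEMENT 9: every morphism of orchestration schemes ⟨F, U, η, σ⟩ : O → O' induces a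
comorphism of institutions Ins(O) → Ins(O'): with sentence translation
α_o(s) = σ_{F(o)}(Spec(η_o)(s)) and model reduction β_o(δ' : F(o) → g') = η_o ≫ U(δ'),
we have δ' ⊨'_{F(o)} α_o(s) ↔ β_o(δ') ⊨_o s.
-/
theorem orchestration_scheme_morphism_comorphism
    {Orc : Type} [Category Orc]
    (Spec : Orc ⥤ Type) (Ground : Orc → Prop)
    (prop : ∀ g, Ground g → Set (Spec.obj g))
    {Orc' : Type} [Category Orc']
    (Spec' : Orc' ⥤ Type) (Ground' : Orc' → Prop)
    (prop' : ∀ g', Ground' g' → Set (Spec'.obj g'))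
    (F : Orc ⥤ Orc') (U : Orc' ⥤ Orc)
    (hF : ∀ g, Ground g → Ground' (F.obj g))
    (hU : ∀ g', Ground' g' → Ground (U.obj g'))
    (η : ∀ o : Orc, o ⟶ U.obj (F.obj o))
    (ηnat : ∀ {a b : Orc} (f : a ⟶ b), f ≫ η b = η a ≫ U.map (F.map f))
    (ηground : ∀ g (hg : Ground g) (e : U.obj (F.obj g) = g), η g = eqToHom e.symm)
    (σ : ∀ o', Spec.obj (U.obj o') → Spec'.obj o')
    (σnat : ∀ {a' b' : Orc'} (f : a' ⟶ b') (s : Spec.obj (U.obj a')),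
      Spec'.map f (σ a' s) = σ b' (Spec.map (U.map f) s))
    (σprop : ∀ g' (hg' : Ground' g') (s : Spec.obj (U.obj g')),
      σ g' s ∈ prop' g' hg' ↔ s ∈ prop (U.obj g') (hU g' hg'))
    (o : Orc) {g' : Orc'} (hg' : Ground' g') (δ' : F.obj o ⟶ g') (s : Spec.obj o) :
    Spec'.map δ' (σ (F.obj o) (Spec.map (η o) s)) ∈ prop' g' hg' ↔
      Spec.map (η o ≫ U.map δ') s ∈ prop (U.obj g') (hU g' hg') := by
  rw [σnat, Functor.map_comp]
  exact σprop g' hg' _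
end

section
/- Soundness of service-oriented resolution: let the query ⟨o ⊢ Q⟩ be derived by resolution from a query ⟨o₁ ⊢ Q₁⟩ and a correct clause ⟨o₂ ⊢ P₂ ⇐ R₂⟩ using computed morphism θ₁ : o₁ → o, via a unifier ⟨θ₁, θ₂⟩ of some s₁ ∈ Q₁ with P₂, where Q = θ₁(Q₁ \ {s₁}) ∪ θ₂(R₂). Then for any solution ψ : o → o' to ⟨o ⊢ Q⟩, the composite θ₁;ψ is a solution to ⟨o₁ ⊢ Q₁⟩. -/
open CategoryTheory

/-
STATEMENT 12: soundness of service-oriented resolution.  If the query ⟨o ⊢ Q⟩ is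
derived by resolution from ⟨o₁ ⊢ Q₁⟩ and a correct clause ⟨o₂ ⊢ P₂ ⇐ R₂⟩ using the
computed morphism θ₁ (extended to a unifier ⟨θ₁, θ₂⟩ of some s₁ ∈ Q₁ with P₂, with
Q = θ₁(Q₁ \ {s₁}) ∪ θ₂(R₂)), then for any solution ψ to ⟨o ⊢ Q⟩ the composite θ₁ ≫ ψ
is a solution to ⟨o₁ ⊢ Q₁⟩.
-/
theorem soundness_of_service_resolution
    {Orc : Type} [Category Orc]
    (Spec : Orc ⥤ Type)
    (Ground : Orc → Prop)
    (prop : ∀ g, Ground g → Set (Spec.obj g))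
    {o₁ o₂ o o' : Orc}
    (Q₁ : Set (Spec.obj o₁)) (s₁ : Spec.obj o₁) (hs₁ : s₁ ∈ Q₁)
    (P₂ : Spec.obj o₂) (R₂ : Set (Spec.obj o₂))
    (θ₁ : o₁ ⟶ o) (θ₂ : o₂ ⟶ o) (ψ : o ⟶ o')
    -- the clause ⟨o₂ ⊢ P₂ ⇐ R₂⟩ is correct
    (hclause : ∀ {g : Orc} (hg : Ground g) (δ : o₂ ⟶ g),
      (∀ r ∈ R₂, Spec.map δ r ∈ prop g hg) → Spec.map δ P₂ ∈ prop g hg)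
    -- ⟨θ₁, θ₂⟩ is a unifier of s₁ and P₂: θ₂(P₂) ⊨ θ₁(s₁)
    (hunif : ∀ {g : Orc} (hg : Ground g) (δ : o ⟶ g),
      Spec.map δ (Spec.map θ₂ P₂) ∈ prop g hg →
      Spec.map δ (Spec.map θ₁ s₁) ∈ prop g hg)
    -- ψ is a solution to the derived query ⟨o ⊢ θ₁(Q₁ \ {s₁}) ∪ θ₂(R₂)⟩
    (hmodels : ∃ (g : Orc) (_ : Ground g) (_ : o' ⟶ g), True)
    (hsol : ∀ {g : Orc} (hg : Ground g) (δ' : o' ⟶ g),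
      ∀ q ∈ Spec.map θ₁ '' (Q₁ \ {s₁}) ∪ Spec.map θ₂ '' R₂,
        Spec.map δ' (Spec.map ψ q) ∈ prop g hg) :
    -- θ₁ ≫ ψ is a solution to ⟨o₁ ⊢ Q₁⟩
    (∃ (g : Orc) (_ : Ground g) (_ : o' ⟶ g), True) ∧
    (∀ {g : Orc} (hg : Ground g) (δ' : o' ⟶ g),
      ∀ q ∈ Q₁, Spec.map δ' (Spec.map (θ₁ ≫ ψ) q) ∈ prop g hg) := by
  refine ⟨hmodels, ?_⟩
  intro g hg δ' q hq
  have key : ∀ x, Spec.map δ' (Spec.map ψ x) = Spec.map (ψ ≫ δ') x := by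
    intro x; rw [Spec.map_comp]; rfl
  by_cases hqs : q = s₁
  · subst hqs
    rw [Spec.map_comp]
    show Spec.map δ' (Spec.map ψ (Spec.map θ₁ q)) ∈ prop g hg
    rw [key]
    apply hunif hg (ψ ≫ δ')
    rw [← key]
    -- clause correctness with δ = θ₂ ≫ ψ ≫ δ'
    have := hclause hg (θ₂ ≫ ψ ≫ δ') ?_
    · rw [Spec.map_comp, Spec.map_comp] at this; exact this
    · intro r hr
      rw [Spec.map_comp, Spec.map_comp]
      exact hsol hg δ' _ (Or.inr ⟨r, hr, rfl⟩)
  · rw [Spec.map_comp]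
    exact hsol hg δ' _ (Or.inl ⟨q, ⟨hq, hqs⟩, rfl⟩)
end

section
/- A service query is satisfiable if and only if it admits a solution: for a query ⟨o ⊢ Q⟩ over an orchestration scheme, there exists a morphism δ : o → g into a ground orchestration g with Spec(δ)(q) ∈ Prop(g) for all q ∈ Q, if and only if there exists a morphism ψ : o → o' such that o' has at least one model and every model δ' : o' → g' of o' satisfies Spec(ψ;δ')(q) ∈ Prop(g') for all q ∈ Q. -/
open CategoryTheory

/-
STATEMENT 13: a service query is satisfiable iff it admits a solution.
-/
theorem service_query_satisfiable_iff_has_solution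
    {Orc : Type} [Category Orc]
    (Spec : Orc ⥤ Type)
    (Ground : Orc → Prop)
    (prop : ∀ g, Ground g → Set (Spec.obj g))
    -- naturality of Prop: morphisms of ground orchestrations preserve properties
    (propNat : ∀ {g g'} (hg : Ground g) (hg' : Ground g') (f : g ⟶ g'),
      ∀ s ∈ prop g hg, Spec.map f s ∈ prop g' hg')
    (o : Orc) (Q : Set (Spec.obj o)) :
    -- the query ⟨o ⊢ Q⟩ is satisfiable
    (∃ (g : Orc) (hg : Ground g) (δ : o ⟶ g),
      ∀ q ∈ Q, Spec.map δ q ∈ prop g hg) ↔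
    -- iff it admits a solution ψ : o → o'
    (∃ (o' : Orc) (ψ : o ⟶ o'),
      (∃ (g : Orc) (_ : Ground g) (_ : o' ⟶ g), True) ∧
      ∀ (g : Orc) (hg : Ground g) (δ' : o' ⟶ g),
        ∀ q ∈ Q, Spec.map (ψ ≫ δ') q ∈ prop g hg) := by
  constructor
  · rintro ⟨g, hg, δ, h⟩
    refine ⟨g, δ, ⟨g, hg, 𝟙 g, trivial⟩, ?_⟩
    intro g' hg' δ' q hq
    rw [Spec.map_comp]
    exact propNat hg hg' δ' _ (h q hq)
  · rintro ⟨o', ψ, ⟨g, hg, f, -⟩, h⟩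
    exact ⟨g, hg, ψ ≫ f, h g hg f⟩
end

section
/- In the institution aLTL, the reduct of Muller automata along signature morphisms satisfies the satisfaction condition: for every function σ : A → A' between sets of actions, every Muller automaton Λ' over P(A'), and every LTL sentence ρ over A, a trace λ' ∈ P(A')^ω satisfies the translated sentence σ(ρ) if and only if its reduct σ⁻¹∘λ' ∈ P(A)^ω satisfies ρ; consequently Λ' ⊨ σ(ρ) iff Λ'|_σ ⊨ ρ, provided the traces accepted by Λ'|_σ are exactly the reducts σ⁻¹∘λ' of traces λ' accepted by Λ'. -/
/-- Translation of LTL sentences along `σ : A → A'`: replace each atom `a` by `σ a`. -/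
def LTL.translate {A A' : Type} (σ : A → A') : LTL A → LTL A'
  | .atom a => .atom (σ a)
  | .not r => .not (r.translate σ)
  | .disj E => .disj (E.attach.map (fun r => r.1.translate σ))
  | .next r => .next (r.translate σ)
  | .until_ r₁ r₂ => .until_ (r₁.translate σ) (r₂.translate σ)
decreasing_by
  all_goals simp_wf
  · have := List.sizeOf_lt_of_mem r.2
    omega
  all_goals omega

/-- The reduct of a trace `λ' ∈ 𝒫(A')^ω` along `σ : A → A'` is `i ↦ σ⁻¹(λ'(i))`. -/
def Trace.reduct {A A' : Type} (σ : A → A') (lam' : ℕ → Set A') : ℕ → Set A :=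
  fun i => σ ⁻¹' (lam' i)

theorem sat_translate {A A' : Type} (σ : A → A') :
    ∀ ρ : LTL A, ∀ lam' : ℕ → Set A',
      LTL.Sat ρ (Trace.reduct σ lam') ↔ LTL.Sat (ρ.translate σ) lam'
  | .atom a, lam' => by simp [LTL.Sat, LTL.translate, Trace.reduct]
  | .not r, lam' => by
      simp only [LTL.Sat, LTL.translate]
      exact not_congr (sat_translate σ r lam')
  | .disj E, lam' => by
      simp only [LTL.Sat, LTL.translate]
      constructor
      · rintro ⟨⟨r, hr⟩, -, hsat⟩
        refine ⟨⟨r.translate σ, ?_⟩, List.mem_attach _ _, (sat_translate σ r lam').mp hsat⟩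
        exact List.mem_map.mpr ⟨⟨r, hr⟩, List.mem_attach _ _, rfl⟩
      · rintro ⟨⟨s, hs⟩, -, hsat⟩
        obtain ⟨⟨r, hr⟩, -, rfl⟩ := List.mem_map.mp hs
        exact ⟨⟨r, hr⟩, List.mem_attach _ _, (sat_translate σ r lam').mpr hsat⟩
  | .next r, lam' => by
      simp only [LTL.Sat, LTL.translate]
      exact sat_translate σ r (Trace.suffix lam' 1)
  | .until_ r₁ r₂, lam' => by
      simp only [LTL.Sat, LTL.translate]
      constructor
      · rintro ⟨i, h2, h1⟩
        exact ⟨i, (sat_translate σ r₂ _).mp h2,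
          fun j hj => (sat_translate σ r₁ _).mp (h1 j hj)⟩
      · rintro ⟨i, h2, h1⟩
        exact ⟨i, (sat_translate σ r₂ _).mpr h2,
          fun j hj => (sat_translate σ r₁ _).mpr (h1 j hj)⟩
decreasing_by
  all_goals simp_wf
  all_goals try omega
  all_goals (have := List.sizeOf_lt_of_mem ‹r ∈ E›; omega)

/-- the satisfaction condition for `aLTL`.  A trace `λ'` satisfies the
translated sentence `σ(ρ)` iff its reduct `σ⁻¹ ∘ λ'` satisfies `ρ`; consequently,
provided the traces accepted by `Λ'|_σ` are exactly the reducts of the traces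
accepted by `Λ'`, we have `Λ' ⊨ σ(ρ) ↔ Λ'|_σ ⊨ ρ`. -/
theorem aLTL_satisfaction_condition {A A' : Type} (σ : A → A') (ρ : LTL A) :
    (∀ lam' : ℕ → Set A', LTL.Sat ρ (Trace.reduct σ lam') ↔
        LTL.Sat (ρ.translate σ) lam') ∧
    (∀ M : Muller A',
      (∀ lam : ℕ → Set A, (Muller.reduct σ M).Accepts lam ↔
          ∃ lam', M.Accepts lam' ∧ lam = Trace.reduct σ lam') →
      (M.SatLTL (ρ.translate σ) ↔ (Muller.reduct σ M).SatLTL ρ)) := by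
  refine ⟨sat_translate σ ρ, fun M hM => ?_⟩
  constructor
  · intro h lam hacc
    obtain ⟨lam', hacc', rfl⟩ := (hM lam).mp hacc
    exact (sat_translate σ ρ lam').mpr (h lam' hacc')
  · intro h lam' hacc'
    exact (sat_translate σ ρ lam').mp (h _ ((hM _).mpr ⟨lam', hacc', rfl⟩))
end
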